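/- Let K ≥ 2, u ∈ ℝ^K, p = softmax(u) (so p_k = e^{u_k}/Σ_j e^{u_j} > 0 and Σ_k p_k = 1), and let y = e_t be a one-hot vector for some t ∈ {1, …, K}. Define the categorical cross entropy l(u, y) := −log p_t, its gradient g := p − y ∈ ℝ^K, and its Hessian H := diag(p) − p p^⊤. Then g lies in the zero-sum subspace V := {v : Σ_k v_k = 0}, there is a unique f ∈ V with H f = y − p, this f is given by f_t = s + 1/p_t − 1 and f_k = s − 1 for k ≠ t (with s = p^⊤ f), and the Newton decrement satisfies f^⊤ H f = (1 − p_t)/p_t ≥ −log p_t = l(u, y). In particular categorical cross entropy is pointwise Hessian-dominated with constant c = 1 on V. -/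

import Mathlib

/-!
The Hessian `H = diag p - p pᵀ` acts by `(H f)_k = p_k (f_k - p ⬝ f)`, so when no `p_k` vanishes
the Newton equation `H f = e_t - p` says exactly that `f = (p ⬝ f - 1) + e_t / p_t`. If moreover
`∑ p = 1`, its solutions form the line `c + e_t / p_t`, which meets the zero-sum hyperplane once.
Pairing the equation with `f` gives the decrement `f_t - p ⬝ f = 1/p_t - 1`, and
`-log x ≤ 1/x - 1` is `log y ≤ y - 1` at `y = 1/x`.
-/

open Matrix

section Hessian

variable {ι : Type*} [Fintype ι] [DecidableEq ι]

abbrev crossEntropyHessian {R : Type*} [CommRing R] (p : ι → R) : Matrix ι ι R :=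
  diagonal p - vecMulVec p p

theorem crossEntropyHessian_mulVec {R : Type*} [CommRing R] (p f : ι → R) :
    crossEntropyHessian p *ᵥ f = fun k => p k * (f k - p ⬝ᵥ f) := by
  ext k
  simp [sub_mulVec, mulVec_diagonal, vecMulVec_mulVec, mul_sub, mul_comm]

variable {p f : ι → ℝ} {t : ι}

theorem crossEntropyHessian_mulVec_eq_single_sub_iff (hp : ∀ k, p k ≠ 0) :
    crossEntropyHessian p *ᵥ f = Pi.single t 1 - p ↔
      ∀ k, f k = p ⬝ᵥ f - 1 + (Pi.single t (p t)⁻¹ : ι → ℝ) k := by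
  rw [crossEntropyHessian_mulVec, funext_iff]
  refine forall_congr' fun k => ?_
  rcases eq_or_ne k t with rfl | hkt
  · simp only [Pi.sub_apply, Pi.single_eq_same]
    field_simp [hp k]
    constructor <;> intro h <;> linarith
  · rw [Pi.sub_apply, Pi.single_eq_of_ne hkt, Pi.single_eq_of_ne hkt, zero_sub, add_zero,
      ← mul_neg_one (p k), mul_right_inj' (hp k)]
    constructor <;> intro h <;> linarith

theorem crossEntropyHessian_mulVec_eq_single_sub_iff_exists (hp : ∀ k, p k ≠ 0)
    (hp1 : ∑ k, p k = 1) :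
    crossEntropyHessian p *ᵥ f = Pi.single t 1 - p ↔
      ∃ c : ℝ, ∀ k, f k = c + (Pi.single t (p t)⁻¹ : ι → ℝ) k := by
  rw [crossEntropyHessian_mulVec_eq_single_sub_iff hp]
  refine ⟨fun h => ⟨_, h⟩, fun ⟨c, hc⟩ => ?_⟩
  have hdot : p ⬝ᵥ f = c + 1 :=
    calc p ⬝ᵥ f = p ⬝ᵥ (fun _ => c) + p ⬝ᵥ Pi.single t (p t)⁻¹ := by
          rw [← dotProduct_add]; congr; ext k; exact hc k
      _ = c + 1 := by
          rw [dotProduct_single, mul_inv_cancel₀ (hp t)]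
          simp [dotProduct, ← Finset.sum_mul, hp1]
  simpa [hdot] using hc

theorem existsUnique_sum_eq_zero_crossEntropyHessian_mulVec_eq (hp : ∀ k, p k ≠ 0)
    (hp1 : ∑ k, p k = 1) :
    ∃! f : ι → ℝ, ∑ k, f k = 0 ∧ crossEntropyHessian p *ᵥ f = Pi.single t 1 - p := by
  have hsum : ∀ c : ℝ,
      ∑ k, (c + (Pi.single t (p t)⁻¹ : ι → ℝ) k) = Fintype.card ι * c + (p t)⁻¹ := by
    intro c
    simp [Finset.sum_add_distrib]
  have hcard : (Fintype.card ι : ℝ) ≠ 0 := by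
    have : Nonempty ι := ⟨t⟩
    exact_mod_cast Fintype.card_ne_zero
  simp only [crossEntropyHessian_mulVec_eq_single_sub_iff_exists hp hp1]
  refine ⟨fun k => -(p t)⁻¹ / Fintype.card ι + (Pi.single t (p t)⁻¹ : ι → ℝ) k,
    ⟨?_, _, fun k => rfl⟩, ?_⟩
  · rw [hsum]; field_simp; ring
  rintro f ⟨hf0, c, hc⟩
  have hc' : c = -(p t)⁻¹ / Fintype.card ι := by
    rw [show f = fun k => c + (Pi.single t (p t)⁻¹ : ι → ℝ) k from funext hc, hsum] at hf0
    rw [eq_div_iff hcard]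
    linarith
  ext k
  rw [hc k, hc']

theorem dotProduct_crossEntropyHessian_mulVec_self_of_mulVec_eq (hp : ∀ k, p k ≠ 0)
    (hf : crossEntropyHessian p *ᵥ f = Pi.single t 1 - p) :
    f ⬝ᵥ crossEntropyHessian p *ᵥ f = (1 - p t) / p t := by
  have hft := (crossEntropyHessian_mulVec_eq_single_sub_iff hp).1 hf t
  rw [Pi.single_eq_same] at hft
  rw [hf, dotProduct_sub, dotProduct_single, dotProduct_comm, hft]
  field_simp [hp t]
  ring

end Hessian

theorem Real.neg_log_le_one_sub_div {x : ℝ} (hx : 0 < x) : -Real.log x ≤ (1 - x) / x := by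
  have := Real.one_sub_inv_le_log_of_pos hx
  rw [sub_div, div_self hx.ne', one_div]
  linarith

section Softmax

variable {ι : Type*} [Fintype ι] (u : ι → ℝ)

theorem exp_div_sum_exp_pos (k : ι) : 0 < Real.exp (u k) / ∑ j, Real.exp (u j) :=
  div_pos (Real.exp_pos _) (Finset.sum_pos (fun _ _ => Real.exp_pos _) ⟨k, Finset.mem_univ k⟩)

theorem sum_exp_div_sum_exp [Nonempty ι] : ∑ k, Real.exp (u k) / ∑ j, Real.exp (u j) = 1 := by
  rw [← Finset.sum_div, div_self]
  exact (Finset.sum_pos (fun _ _ => Real.exp_pos _) Finset.univ_nonempty).ne'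

end Softmax

theorem stmt18_general (K : ℕ) (u : Fin K → ℝ) (t : Fin K)
    (p y g : Fin K → ℝ)
    (hp : ∀ k, p k = Real.exp (u k) / ∑ j, Real.exp (u j))
    (hy : ∀ k, y k = if k = t then 1 else 0)
    (hg : ∀ k, g k = p k - y k)
    (H : Matrix (Fin K) (Fin K) ℝ)
    (hH : H = Matrix.diagonal p - Matrix.vecMulVec p p) :
    (∑ k, g k = 0) ∧
    (∃! f : Fin K → ℝ, (∑ k, f k = 0) ∧ H.mulVec f = fun k => y k - p k) ∧
    (∀ f : Fin K → ℝ, (∑ k, f k = 0) → H.mulVec f = (fun k => y k - p k) →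
      f t = p ⬝ᵥ f + 1 / p t - 1 ∧
      (∀ k, k ≠ t → f k = p ⬝ᵥ f - 1) ∧
      f ⬝ᵥ H.mulVec f = (1 - p t) / p t) ∧
    (1 - p t) / p t ≥ -Real.log (p t) := by
  have : Nonempty (Fin K) := ⟨t⟩
  have hpos : ∀ k, 0 < p k := fun k => hp k ▸ exp_div_sum_exp_pos u k
  have hp0 : ∀ k, p k ≠ 0 := fun k => (hpos k).ne'
  have hp1 : ∑ k, p k = 1 := by simp only [hp, sum_exp_div_sum_exp]
  obtain rfl : y = Pi.single t 1 := funext fun k => by rw [hy, Pi.single_apply]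
  subst hH
  refine ⟨?_, existsUnique_sum_eq_zero_crossEntropyHessian_mulVec_eq hp0 hp1, fun f _ hf => ?_,
    Real.neg_log_le_one_sub_div (hpos t)⟩
  · simp [hg, Finset.sum_sub_distrib, hp1]
  have hchar := (crossEntropyHessian_mulVec_eq_single_sub_iff hp0).1 hf
  refine ⟨?_, fun k hkt => ?_,
    dotProduct_crossEntropyHessian_mulVec_self_of_mulVec_eq hp0 hf⟩
  · rw [hchar t, Pi.single_eq_same, one_div]; ring
  · rw [hchar k, Pi.single_eq_of_ne hkt, add_zero]

/-- Categorical cross entropy is pointwise Hessian-dominated with constant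
`c = 1` on the zero-sum subspace: for `p = softmax(u)`, one-hot label `y = e_t`, gradient
`g = p − y` and Hessian `H = diag(p) − p pᵀ`, the gradient lies in the zero-sum subspace,
the Newton equation `H f = y − p` has a unique zero-sum solution, given explicitly by
`f_t = s + 1/p_t − 1`, `f_k = s − 1` (`k ≠ t`, `s = pᵀf`), and the Newton decrement is
`fᵀHf = (1−p_t)/p_t ≥ −log p_t = l(u, y)`. -/
theorem stmt18 (K : ℕ) (hK : 2 ≤ K) (u : Fin K → ℝ) (t : Fin K)
    (p y g : Fin K → ℝ)
    (hp : ∀ k, p k = Real.exp (u k) / ∑ j, Real.exp (u j))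
    (hy : ∀ k, y k = if k = t then 1 else 0)
    (hg : ∀ k, g k = p k - y k)
    (H : Matrix (Fin K) (Fin K) ℝ)
    (hH : H = Matrix.diagonal p - Matrix.vecMulVec p p) :
    (∑ k, g k = 0) ∧
    (∃! f : Fin K → ℝ, (∑ k, f k = 0) ∧ H.mulVec f = fun k => y k - p k) ∧
    (∀ f : Fin K → ℝ, (∑ k, f k = 0) → H.mulVec f = (fun k => y k - p k) →
      f t = p ⬝ᵥ f + 1 / p t - 1 ∧
      (∀ k, k ≠ t → f k = p ⬝ᵥ f - 1) ∧
      f ⬝ᵥ H.mulVec f = (1 - p t) / p t) ∧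
    (1 - p t) / p t ≥ -Real.log (p t) :=
  stmt18_general K u t p y g hp hy hg H hH
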